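/- Let A be an entrywise nonnegative n×n matrix. Then the function α ↦ r(S_α(A)), where r is the spectral radius and S_α(A)_{ij} = a_{ij}^α a_{ji}^{1−α}, is decreasing on [0, 1/2] and increasing on [1/2, 1]; in particular r(S_α(A)) ≥ r(S(A)) for all α ∈ [0,1], where S(A) = S_{1/2}(A). -/

import Mathlib

/-!
Entrywise, `S_{t a + (1-t) b}` is the Hadamard geometric mean `S_a^(t) ∘ S_b^(1-t)`, so Kingman's
inequality `r(A^(t) ∘ B^(1-t)) ≤ r(A)^t r(B)^(1-t)` for nonnegative `A`, `B` makes `α ↦ r(S_α)`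
log-convex. Kingman's inequality comes from Gelfand's formula: by Hölder's inequality
`(A^(t) ∘ B^(1-t))^k ≤ (A^k)^(t) ∘ (B^k)^(1-t)` entrywise, and the Frobenius norm is monotone
and, again by Hölder, log-convex on nonnegative matrices.
Since `S_{1-α} = S_αᵀ`, the function is also symmetric about `1/2`. For `0 ≤ a < b ≤ 1/2`, `b` lies
strictly between `a` and `1 - a`, whence `r(S_b) ≤ r(S_a)^t r(S_{1-a})^(1-t) = r(S_a)`.
-/

/-- The spectral radius of a real `n × n` matrix (largest modulus of a complex eigenvalue). -/
noncomputable def specRad {n : ℕ} (A : Matrix (Fin n) (Fin n) ℝ) : ℝ :=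
  (spectralRadius ℂ (A.map (Complex.ofReal))).toReal

/-- The weighted geometric symmetrization `S_α(A)` with entries `a_{ij}^α a_{ji}^{1-α}`. -/
noncomputable def wgs {n : ℕ} (α : ℝ) (A : Matrix (Fin n) (Fin n) ℝ) :
    Matrix (Fin n) (Fin n) ℝ :=
  Matrix.of fun i j => A i j ^ α * A j i ^ (1 - α)

theorem Real.sum_rpow_mul_rpow_one_sub_le {ι : Type*} (s : Finset ι) {f g : ι → ℝ}
    (hf : ∀ i ∈ s, 0 ≤ f i) (hg : ∀ i ∈ s, 0 ≤ g i) {t : ℝ} (ht₀ : 0 < t) (ht₁ : t < 1) :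
    ∑ i ∈ s, f i ^ t * g i ^ (1 - t) ≤ (∑ i ∈ s, f i) ^ t * (∑ i ∈ s, g i) ^ (1 - t) := by
  have h := Real.inner_le_Lp_mul_Lq_of_nonneg s (Real.HolderConjugate.inv_one_sub_inv ht₀ ht₁)
    (fun i hi => Real.rpow_nonneg (hf i hi) t) (fun i hi => Real.rpow_nonneg (hg i hi) (1 - t))
  simp only [one_div, inv_inv] at h
  convert h using 3 <;> refine Finset.sum_congr rfl fun i hi => ?_
  · exact (Real.rpow_rpow_inv (hf i hi) ht₀.ne').symm
  · exact (Real.rpow_rpow_inv (hg i hi) (sub_pos.2 ht₁).ne').symm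

theorem Real.rpow_mul_rpow_one_sub_rpow {x y : ℝ} (hx : 0 ≤ x) (hy : 0 ≤ y) (t r : ℝ) :
    (x ^ t * y ^ (1 - t)) ^ r = (x ^ r) ^ t * (y ^ r) ^ (1 - t) := by
  rw [Real.mul_rpow (Real.rpow_nonneg hx t) (Real.rpow_nonneg hy _), ← Real.rpow_mul hx,
    ← Real.rpow_mul hy, ← Real.rpow_mul hx, ← Real.rpow_mul hy, mul_comm t, mul_comm (1 - t)]

namespace Matrix

variable {ι m n : Type*}

noncomputable def hadamardGeomMean (t : ℝ) (A B : Matrix m n ℝ) : Matrix m n ℝ :=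
  of fun i j => A i j ^ t * B i j ^ (1 - t)

theorem hadamardGeomMean_apply (t : ℝ) (A B : Matrix m n ℝ) (i : m) (j : n) :
    hadamardGeomMean t A B i j = A i j ^ t * B i j ^ (1 - t) := rfl

theorem hadamardGeomMean_nonneg {A B : Matrix m n ℝ} (hA : ∀ i j, 0 ≤ A i j)
    (hB : ∀ i j, 0 ≤ B i j) (t : ℝ) (i : m) (j : n) : 0 ≤ hadamardGeomMean t A B i j :=
  mul_nonneg (Real.rpow_nonneg (hA i j) t) (Real.rpow_nonneg (hB i j) _)

theorem hadamardGeomMean_pow_apply_le [Fintype ι] [DecidableEq ι] {A B : Matrix ι ι ℝ}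
    (hA : ∀ i j, 0 ≤ A i j) (hB : ∀ i j, 0 ≤ B i j) {t : ℝ} (ht₀ : 0 < t) (ht₁ : t < 1)
    (k : ℕ) (i j : ι) :
    (hadamardGeomMean t A B ^ k) i j ≤ hadamardGeomMean t (A ^ k) (B ^ k) i j := by
  induction k generalizing i with
  | zero =>
    by_cases h : i = j
    · simp [hadamardGeomMean_apply, h]
    · simpa [h] using
        hadamardGeomMean_nonneg (pow_apply_nonneg hA 0) (pow_apply_nonneg hB 0) t i j
  | succ k ih =>
    simp only [pow_succ', mul_apply, hadamardGeomMean_apply] at ih ⊢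
    calc ∑ l, A i l ^ t * B i l ^ (1 - t) * (hadamardGeomMean t A B ^ k) l j
        ≤ ∑ l, (A i l * (A ^ k) l j) ^ t * (B i l * (B ^ k) l j) ^ (1 - t) := by
          refine Finset.sum_le_sum fun l _ => ?_
          calc A i l ^ t * B i l ^ (1 - t) * (hadamardGeomMean t A B ^ k) l j
              ≤ A i l ^ t * B i l ^ (1 - t) * ((A ^ k) l j ^ t * (B ^ k) l j ^ (1 - t)) :=
                mul_le_mul_of_nonneg_left (ih l) (hadamardGeomMean_nonneg hA hB t i l)
            _ = _ := by
                rw [Real.mul_rpow (hA i l) (pow_apply_nonneg hA k l j),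
                  Real.mul_rpow (hB i l) (pow_apply_nonneg hB k l j)]
                ring
      _ ≤ _ := Real.sum_rpow_mul_rpow_one_sub_le _
          (fun l _ => mul_nonneg (hA i l) (pow_apply_nonneg hA k l j))
          (fun l _ => mul_nonneg (hB i l) (pow_apply_nonneg hB k l j)) ht₀ ht₁

section Frobenius

attribute [local instance] frobeniusNormedAddCommGroup

variable [Fintype m] [Fintype n]

theorem frobenius_norm_eq_of_nonneg {P : Matrix m n ℝ} (hP : ∀ i j, 0 ≤ P i j) :
    ‖P‖ = (∑ i, ∑ j, P i j ^ (2 : ℝ)) ^ (1 / 2 : ℝ) := by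
  simp only [frobenius_norm_def, Real.norm_of_nonneg (hP _ _)]

theorem frobenius_norm_le_of_le {P Q : Matrix m n ℝ} (hP : ∀ i j, 0 ≤ P i j)
    (hPQ : ∀ i j, P i j ≤ Q i j) : ‖P‖ ≤ ‖Q‖ := by
  have hQ i j : 0 ≤ Q i j := (hP i j).trans (hPQ i j)
  rw [frobenius_norm_eq_of_nonneg hP, frobenius_norm_eq_of_nonneg hQ]
  refine Real.rpow_le_rpow (Finset.sum_nonneg fun i _ => Finset.sum_nonneg fun j _ =>
    Real.rpow_nonneg (hP i j) _) ?_ (by norm_num)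
  gcongr with i _ j _
  exacts [hP i j, hPQ i j]

theorem frobenius_norm_hadamardGeomMean_le {P Q : Matrix m n ℝ} (hP : ∀ i j, 0 ≤ P i j)
    (hQ : ∀ i j, 0 ≤ Q i j) {t : ℝ} (ht₀ : 0 < t) (ht₁ : t < 1) :
    ‖hadamardGeomMean t P Q‖ ≤ ‖P‖ ^ t * ‖Q‖ ^ (1 - t) := by
  have hP2 i j : 0 ≤ P i j ^ (2 : ℝ) := Real.rpow_nonneg (hP i j) _
  have hQ2 i j : 0 ≤ Q i j ^ (2 : ℝ) := Real.rpow_nonneg (hQ i j) _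
  have hsum : ∑ i, ∑ j, hadamardGeomMean t P Q i j ^ (2 : ℝ) ≤
      (∑ i, ∑ j, P i j ^ (2 : ℝ)) ^ t * (∑ i, ∑ j, Q i j ^ (2 : ℝ)) ^ (1 - t) := calc
    _ = ∑ i, ∑ j, (P i j ^ (2 : ℝ)) ^ t * (Q i j ^ (2 : ℝ)) ^ (1 - t) := by
        simp only [hadamardGeomMean_apply, Real.rpow_mul_rpow_one_sub_rpow (hP _ _) (hQ _ _)]
    _ ≤ ∑ i, (∑ j, P i j ^ (2 : ℝ)) ^ t * (∑ j, Q i j ^ (2 : ℝ)) ^ (1 - t) :=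
        Finset.sum_le_sum fun i _ => Real.sum_rpow_mul_rpow_one_sub_le _
          (fun j _ => hP2 i j) (fun j _ => hQ2 i j) ht₀ ht₁
    _ ≤ _ := Real.sum_rpow_mul_rpow_one_sub_le _
          (fun i _ => Finset.sum_nonneg fun j _ => hP2 i j)
          (fun i _ => Finset.sum_nonneg fun j _ => hQ2 i j) ht₀ ht₁
  rw [frobenius_norm_eq_of_nonneg (hadamardGeomMean_nonneg hP hQ t),
    frobenius_norm_eq_of_nonneg hP, frobenius_norm_eq_of_nonneg hQ,
    ← Real.rpow_mul_rpow_one_sub_rpow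
      (Finset.sum_nonneg fun i _ => Finset.sum_nonneg fun j _ => hP2 i j)
      (Finset.sum_nonneg fun i _ => Finset.sum_nonneg fun j _ => hQ2 i j)]
  exact Real.rpow_le_rpow (Finset.sum_nonneg fun i _ => Finset.sum_nonneg fun j _ =>
    Real.rpow_nonneg (hadamardGeomMean_nonneg hP hQ t i j) _) hsum (by norm_num)

end Frobenius

end Matrix

section SpectralRadius

open Filter Topology Matrix

attribute [local instance] frobeniusNormedAddCommGroup frobeniusNormedRing frobeniusNormedAlgebra

variable {n : ℕ}

theorem specRad_nonneg (M : Matrix (Fin n) (Fin n) ℝ) : 0 ≤ specRad M := ENNReal.toReal_nonneg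

theorem tendsto_frobenius_norm_pow_rpow_specRad (M : Matrix (Fin n) (Fin n) ℝ) :
    Tendsto (fun k : ℕ => ‖M ^ k‖ ^ (1 / k : ℝ)) atTop (𝓝 (specRad M)) := by
  set a := M.map Complex.ofReal
  have hnorm (k : ℕ) : ‖a ^ k‖ = ‖M ^ k‖ := by
    rw [← frobenius_norm_map_eq (M ^ k) Complex.ofReal Complex.norm_real]
    exact congrArg norm (map_pow Complex.ofRealHom.mapMatrix M k).symm
  have hfin : spectralRadius ℂ a ≠ ⊤ := by
    have h := spectrum.spectralRadius_le_pow_nnnorm_pow_one_div ℂ a 0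
    simp only [zero_add, pow_one, Nat.cast_zero, div_one, ENNReal.rpow_one] at h
    exact ne_top_of_le_ne_top (ENNReal.mul_ne_top ENNReal.coe_ne_top ENNReal.coe_ne_top) h
  refine ((ENNReal.tendsto_toReal hfin).comp
    (spectrum.pow_norm_pow_one_div_tendsto_nhds_spectralRadius a)).congr fun k => ?_
  simp only [Function.comp_apply, hnorm]
  exact ENNReal.toReal_ofReal (Real.rpow_nonneg (norm_nonneg _) _)

theorem specRad_transpose (M : Matrix (Fin n) (Fin n) ℝ) : specRad Mᵀ = specRad M :=
  tendsto_nhds_unique (tendsto_frobenius_norm_pow_rpow_specRad Mᵀ) <| by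
    simpa only [← transpose_pow, frobenius_norm_transpose] using
      tendsto_frobenius_norm_pow_rpow_specRad M

theorem specRad_hadamardGeomMean_le {A B : Matrix (Fin n) (Fin n) ℝ} (hA : ∀ i j, 0 ≤ A i j)
    (hB : ∀ i j, 0 ≤ B i j) {t : ℝ} (ht₀ : 0 < t) (ht₁ : t < 1) :
    specRad (hadamardGeomMean t A B) ≤ specRad A ^ t * specRad B ^ (1 - t) := by
  refine le_of_tendsto_of_tendsto' (tendsto_frobenius_norm_pow_rpow_specRad _)
    (((tendsto_frobenius_norm_pow_rpow_specRad A).rpow_const (Or.inr ht₀.le)).mul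
      ((tendsto_frobenius_norm_pow_rpow_specRad B).rpow_const (Or.inr (sub_pos.2 ht₁).le)))
    fun k => ?_
  have hk : ‖hadamardGeomMean t A B ^ k‖ ≤ ‖A ^ k‖ ^ t * ‖B ^ k‖ ^ (1 - t) :=
    (frobenius_norm_le_of_le (pow_apply_nonneg (hadamardGeomMean_nonneg hA hB t) k)
      (hadamardGeomMean_pow_apply_le hA hB ht₀ ht₁ k)).trans
      (frobenius_norm_hadamardGeomMean_le (pow_apply_nonneg hA k) (pow_apply_nonneg hB k) ht₀ ht₁)
  calc ‖hadamardGeomMean t A B ^ k‖ ^ (1 / k : ℝ)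
      ≤ (‖A ^ k‖ ^ t * ‖B ^ k‖ ^ (1 - t)) ^ (1 / k : ℝ) :=
        Real.rpow_le_rpow (norm_nonneg _) hk (by positivity)
    _ = _ := Real.rpow_mul_rpow_one_sub_rpow (norm_nonneg _) (norm_nonneg _) t _

end SpectralRadius

section WeightedGeometricSymmetrization

open scoped Matrix

variable {n : ℕ} {A : Matrix (Fin n) (Fin n) ℝ}

theorem wgs_nonneg (hA : ∀ i j, 0 ≤ A i j) (α : ℝ) (i j : Fin n) : 0 ≤ wgs α A i j :=
  mul_nonneg (Real.rpow_nonneg (hA i j) α) (Real.rpow_nonneg (hA j i) _)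

theorem transpose_wgs (α : ℝ) (A : Matrix (Fin n) (Fin n) ℝ) : (wgs α A)ᵀ = wgs (1 - α) A := by
  ext i j
  simp only [wgs, Matrix.transpose_apply, Matrix.of_apply, sub_sub_cancel, mul_comm]

theorem specRad_wgs_one_sub (α : ℝ) (A : Matrix (Fin n) (Fin n) ℝ) :
    specRad (wgs (1 - α) A) = specRad (wgs α A) := by
  rw [← transpose_wgs, specRad_transpose]

theorem wgs_mul_add_one_sub_mul (hA : ∀ i j, 0 ≤ A i j) {a b t : ℝ} (ha₀ : 0 ≤ a) (ha₁ : a ≤ 1)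
    (hb₀ : 0 ≤ b) (hb₁ : b ≤ 1) (ht₀ : 0 ≤ t) (ht₁ : t ≤ 1) :
    wgs (t * a + (1 - t) * b) A = Matrix.hadamardGeomMean t (wgs a A) (wgs b A) := by
  have key {x : ℝ} (hx : 0 ≤ x) {p q : ℝ} (hp : 0 ≤ p) (hq : 0 ≤ q) :
      (x ^ p) ^ t * (x ^ q) ^ (1 - t) = x ^ (t * p + (1 - t) * q) := by
    rw [← Real.rpow_mul hx, ← Real.rpow_mul hx, ← Real.rpow_add_of_nonneg hx
      (by nlinarith) (by nlinarith), mul_comm p, mul_comm q]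
  ext i j
  simp only [wgs, Matrix.hadamardGeomMean_apply, Matrix.of_apply]
  rw [Real.mul_rpow (Real.rpow_nonneg (hA i j) _) (Real.rpow_nonneg (hA j i) _),
    Real.mul_rpow (Real.rpow_nonneg (hA i j) _) (Real.rpow_nonneg (hA j i) _),
    mul_mul_mul_comm, key (hA i j) ha₀ hb₀, key (hA j i) (by linarith) (by linarith)]
  ring_nf

theorem specRad_wgs_le_of_mem_Ioo (hA : ∀ i j, 0 ≤ A i j) {a b : ℝ} (ha : 0 ≤ a)
    (hb : b ∈ Set.Ioo a (1 - a)) : specRad (wgs b A) ≤ specRad (wgs a A) := by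
  have ha₁ : a < 1 - a := hb.1.trans hb.2
  rw [← openSegment_eq_Ioo ha₁] at hb
  obtain ⟨s, t, hs, ht, hst, rfl⟩ := hb
  obtain rfl : t = 1 - s := by linarith
  rw [smul_eq_mul, smul_eq_mul,
    wgs_mul_add_one_sub_mul hA ha (by linarith) (by linarith) (by linarith) hs.le (by linarith)]
  calc specRad (Matrix.hadamardGeomMean s (wgs a A) (wgs (1 - a) A))
      ≤ specRad (wgs a A) ^ s * specRad (wgs (1 - a) A) ^ (1 - s) :=
        specRad_hadamardGeomMean_le (wgs_nonneg hA a) (wgs_nonneg hA (1 - a)) hs (by linarith)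
    _ = specRad (wgs a A) := by
        rw [specRad_wgs_one_sub, ← Real.rpow_add_of_nonneg (specRad_nonneg _) hs.le ht.le,
          add_sub_cancel, Real.rpow_one]

end WeightedGeometricSymmetrization

/-- `α ↦ r(S_α(A))` is decreasing on `[0, 1/2]` and increasing on `[1/2, 1]`;
in particular `r(S_α(A)) ≥ r(S_{1/2}(A))` for all `α ∈ [0,1]`. -/
theorem specRad_wgs_monotonicity {n : ℕ} (A : Matrix (Fin n) (Fin n) ℝ)
    (hA : ∀ i j, 0 ≤ A i j) :
    (∀ a b : ℝ, 0 ≤ a → a ≤ b → b ≤ 1 / 2 → specRad (wgs b A) ≤ specRad (wgs a A)) ∧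
    (∀ a b : ℝ, 1 / 2 ≤ a → a ≤ b → b ≤ 1 → specRad (wgs a A) ≤ specRad (wgs b A)) ∧
    (∀ α : ℝ, 0 ≤ α → α ≤ 1 → specRad (wgs (1 / 2) A) ≤ specRad (wgs α A)) := by
  have left (a b : ℝ) (ha : 0 ≤ a) (hab : a ≤ b) (hb : b ≤ 1 / 2) :
      specRad (wgs b A) ≤ specRad (wgs a A) := by
    rcases hab.eq_or_lt with rfl | hab
    · exact le_rfl
    · exact specRad_wgs_le_of_mem_Ioo hA ha ⟨hab, by linarith⟩
  have right (a b : ℝ) (ha : 1 / 2 ≤ a) (hab : a ≤ b) (hb : b ≤ 1) :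
      specRad (wgs a A) ≤ specRad (wgs b A) := by
    simpa only [specRad_wgs_one_sub] using
      left (1 - b) (1 - a) (by linarith) (by linarith) (by linarith)
  refine ⟨left, right, fun α h₀ h₁ => ?_⟩
  rcases le_total α (1 / 2) with h | h
  · exact left α _ h₀ h le_rfl
  · exact right _ α le_rfl h h₁
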